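/- arXiv:2310.09643 — 3 statements merged into one kernel-verified Lean document; each statement's English description precedes it below -/
import Mathlib

section
/- The statement 'given ℕ-indexed sequences of nonempty sets (A_n), (B_n) and injections f_n : A_n → B_n, there exists a sequence of functions h_n : B_n → A_n' implies countable choice. -/
theorem stmt_8
    (h : ∀ (A B : ℕ → Type), (∀ n, Nonempty (A n)) → (∀ n, Nonempty (B n)) →
      ∀ f : ∀ n, A n → B n, (∀ n, Function.Injective (f n)) →
      Nonempty (∀ n, B n → A n)) :
    ∀ A : ℕ → Type, (∀ n, Nonempty (A n)) → Nonempty (∀ n, A n) := by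
  intro A hA
  obtain ⟨g⟩ := h A (fun n => Option (A n)) hA (fun n => ⟨none⟩)
    (fun n => Option.some) (fun n => Option.some_injective _)
  exact ⟨fun n => g n none⟩
end

section
/- The well-foundedness principle WF_{b4}^s implies the Dual Cantor–Schröder–Bernstein theorem: if X and Y are nonempty sets with surjections X → Y and Y → X, then there is a bijection X ≃ Y. -/
theorem stmt_9
    (hWF : ∀ (A : ℕ → Type) (f : ∀ i, A i → A (i + 1)),
      (∀ i, Function.Surjective (f i)) → ∃ n, Nonempty (A n ≃ A (n + 1)))
    (X Y : Type) (hX : Nonempty X) (hY : Nonempty Y)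
    (g : X → Y) (hg : Function.Surjective g)
    (h : Y → X) (hh : Function.Surjective h) :
    Nonempty (X ≃ Y) := by
  set A : ℕ → Type := fun n => if n % 2 = 0 then X else Y with hA
  have eX : ∀ n, n % 2 = 0 → A n = X := by intro n hn; simp [hA, hn]
  have eY : ∀ n, n % 2 = 1 → A n = Y := by intro n hn; simp [hA, hn]
  set f : ∀ i, A i → A (i + 1) := fun i a =>
    if hi : i % 2 = 0 then
      cast (eY (i + 1) (by omega)).symm (g (cast (eX i hi) a))
    else
      cast (eX (i + 1) (by omega)).symm (h (cast (eY i (by omega)) a)) with hf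
  have hsurj : ∀ i, Function.Surjective (f i) := by
    intro i b
    by_cases hi : i % 2 = 0
    · obtain ⟨x, hx⟩ := hg (cast (eY (i + 1) (by omega)) b)
      refine ⟨cast (eX i hi).symm x, ?_⟩
      simp [hf, hi, hx]
    · obtain ⟨y, hy⟩ := hh (cast (eX (i + 1) (by omega)) b)
      refine ⟨cast (eY i (by omega)).symm y, ?_⟩
      simp [hf, hi, hy]
  obtain ⟨n, ⟨e⟩⟩ := hWF A f hsurj
  by_cases hn : n % 2 = 0
  · exact ⟨(Equiv.cast (eX n hn)).symm.trans (e.trans (Equiv.cast (eY (n + 1) (by omega))))⟩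
  · exact ⟨((Equiv.cast (eY n (by omega))).symm.trans
      (e.trans (Equiv.cast (eX (n + 1) (by omega))))).symm⟩
end

section
/- Countable choice implies WF_{b4}^i → WF_{b3}^i: if every sequence of sets with chosen injections f_i : A_{i+1} → A_i has n with A_n ≃ A_{n+1}, then every sequence of sets merely satisfying |A_{i+1}| ≤ |A_i| for all i has n with A_n ≃ A_{n+1}. -/
theorem stmt_18
    (hCC : ∀ A : ℕ → Type, (∀ n, Nonempty (A n)) → Nonempty (∀ n, A n))
    (h4 : ∀ (A : ℕ → Type) (f : ∀ i, A (i + 1) → A i),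
      (∀ i, Function.Injective (f i)) → ∃ n, Nonempty (A n ≃ A (n + 1))) :
    ∀ A : ℕ → Type, (∀ i, ∃ f : A (i + 1) → A i, Function.Injective f) →
      ∃ n, Nonempty (A n ≃ A (n + 1)) := by
  intro A h
  obtain ⟨g⟩ := hCC (fun n => {f : A (n + 1) → A n // Function.Injective f})
    (fun n => let ⟨f, hf⟩ := h n; ⟨⟨f, hf⟩⟩)
  exact h4 A (fun n => (g n).1) (fun n => (g n).2)
end
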